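/- Let M be a minimally vertically 4-connected matroid with at least six elements that has no 4-element cocircuit and no 5-element cocircuit containing a triangle. Then there is no element a of M such that M \ a has an exact vertical j-separation for some j ∈ {1,2}. -/

import Mathlib

open Set Matroid

universe u

variable {α : Type u}

/-- The rank of a set `X` in a matroid `M`: the supremum of the cardinalities of the
independent subsets of `X`. -/
noncomputable def mrk (M : Matroid α) (X : Set α) : ℕ∞ :=
  ⨆ I ∈ {I : Set α | M.Indep I ∧ I ⊆ X}, I.encard

/-- The rank `r(M)` of a matroid `M`. -/
noncomputable def mrank (M : Matroid α) : ℕ∞ := mrk M M.E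

/-- The connectivity function `λ_M(X) = r(X) + r(E(M) - X) - r(M)`. -/
noncomputable def lam (M : Matroid α) (X : Set α) : ℕ∞ :=
  mrk M X + mrk M (M.E \ X) - mrank M

/-- The deletion `M \ D` of a set of elements `D` from `M`. -/
def mdel (M : Matroid α) (D : Set α) : Matroid α := M ↾ (M.E \ D)

/-- A circuit of a matroid: a minimal dependent set. -/
def MCircuit (M : Matroid α) (C : Set α) : Prop := M.Dep C ∧ ∀ D, D ⊂ C → M.Indep D

/-- A cocircuit of a matroid: a circuit of the dual matroid. -/
def MCocircuit (M : Matroid α) (C : Set α) : Prop := MCircuit M✶ C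

/-- A triangle: a 3-element circuit. -/
def IsTriangle (M : Matroid α) (T : Set α) : Prop := MCircuit M T ∧ T.encard = 3

/-- `(X, Y)` is a vertical `j`-separation of `M`: a partition of `E(M)` with
`λ_M(X) < j` and `min {r(X), r(Y)} ≥ j`. -/
def IsVSep (M : Matroid α) (j : ℕ) (X Y : Set α) : Prop :=
  X ∪ Y = M.E ∧ Disjoint X Y ∧ lam M X < (j : ℕ∞) ∧
    (j : ℕ∞) ≤ mrk M X ∧ (j : ℕ∞) ≤ mrk M Y

/-- An exact vertical `j`-separation: one with `λ_M(X) = j - 1`. -/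
def IsExactVSep (M : Matroid α) (j : ℕ) (X Y : Set α) : Prop :=
  IsVSep M j X Y ∧ lam M X = (j : ℕ∞) - 1

/-- `M` is vertically `k`-connected: it has no vertical `j`-separation for a
positive integer `j < k`. -/
def VertConn (M : Matroid α) (k : ℕ) : Prop :=
  ∀ j X Y, 0 < j → j < k → ¬ IsVSep M j X Y

/-- `(X, Y)` is a (Tutte) `j`-separation of `M`. -/
def IsSep (M : Matroid α) (j : ℕ) (X Y : Set α) : Prop :=
  X ∪ Y = M.E ∧ Disjoint X Y ∧ lam M X < (j : ℕ∞) ∧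
    (j : ℕ∞) ≤ X.encard ∧ (j : ℕ∞) ≤ Y.encard

/-- `M` is (Tutte) `k`-connected. -/
def TConn (M : Matroid α) (k : ℕ) : Prop :=
  ∀ j X Y, 0 < j → j < k → ¬ IsSep M j X Y

/-- `M` is minimally vertically 4-connected. -/
def MinVertConn4 (M : Matroid α) : Prop :=
  VertConn M 4 ∧ ∀ e ∈ M.E, ¬ VertConn (mdel M {e}) 4

/-- `M` is a simple matroid: every subset of the ground set with at most two
elements is independent (no loops and no parallel pairs). -/
def MSimple (M : Matroid α) : Prop := ∀ S ⊆ M.E, S.encard ≤ 2 → M.Indep S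

/-- `M` has a restriction isomorphic to `U_{2,4}`: a 4-element subset of the ground set
of rank 2, all of whose subsets with at most 2 elements are independent. -/
def HasU24Restriction (M : Matroid α) : Prop :=
  ∃ X ⊆ M.E, X.encard = 4 ∧ mrk M X = 2 ∧ ∀ S ⊆ X, S.encard ≤ 2 → M.Indep S

/-- The restriction `M|X` is isomorphic to `U_{2,4}`. -/
def RestrIsoU24 (M : Matroid α) (X : Set α) : Prop :=
  X ⊆ M.E ∧ X.encard = 4 ∧ mrk M X = 2 ∧ ∀ S ⊆ X, S.encard ≤ 2 → M.Indep S

/-- The restriction `M|C` is isomorphic to `U_{2,k} ⊕ U_{2,2}`: `C` is the disjoint union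
of a `k`-element rank-2 set `L` containing no loops or parallel pairs (a copy of `U_{2,k}`)
and a 2-element independent set `P` (a copy of `U_{2,2}`), with `r(C) = r(L) + r(P) = 4`,
so that the restriction is the direct sum of the two pieces. -/
def RestrIsoLinePlusPair (M : Matroid α) (C : Set α) (k : ℕ) : Prop :=
  ∃ L P, C = L ∪ P ∧ Disjoint L P ∧ L.encard = (k : ℕ∞) ∧ P.encard = 2 ∧
    M.Indep P ∧ mrk M L = 2 ∧ (∀ S ⊆ L, S.encard ≤ 2 → M.Indep S) ∧ mrk M C = 4

/-- The restriction `M|X` is isomorphic to the 2-sum `U_{2,4} ⊕₂ U_{2,4}`: `X` is the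
disjoint union of two 3-element circuits `T₁` and `T₂`, and the circuits of `M` contained
in `X` (i.e. the circuits of `M|X`) are exactly `T₁`, `T₂`, and the unions `P₁ ∪ P₂` of
2-element subsets `P₁ ⊆ T₁` and `P₂ ⊆ T₂`. -/
def RestrIsoTwoSumU24U24 (M : Matroid α) (X : Set α) : Prop :=
  X ⊆ M.E ∧ ∃ T₁ T₂ : Set α, Disjoint T₁ T₂ ∧ X = T₁ ∪ T₂ ∧
    T₁.encard = 3 ∧ T₂.encard = 3 ∧
    ∀ C ⊆ X, (MCircuit M C ↔ (C = T₁ ∨ C = T₂ ∨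
      ∃ P₁ P₂, P₁ ⊆ T₁ ∧ P₂ ⊆ T₂ ∧ P₁.encard = 2 ∧ P₂.encard = 2 ∧ C = P₁ ∪ P₂))

/-- The columns of the `GF(3)`-matrix representing `N₉`. -/
def N9Cols : Fin 9 → Fin 4 → ZMod 3 :=
  ![![1, 0, 0, 0], ![0, 1, 0, 0], ![0, 0, 1, 0], ![0, 0, 0, 1], ![0, 1, 1, -1],
    ![1, 0, 1, 1], ![1, 1, 0, 1], ![-1, 1, 1, 0], ![1, -1, 1, -1]]

/-- `M` is isomorphic to `N₉`, the 9-element rank-4 matroid represented over `GF(3)`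
by the matrix with columns `N9Cols`. -/
def IsoN9 (M : Matroid α) : Prop :=
  ∃ φ : α → Fin 9, Set.BijOn φ M.E Set.univ ∧
    ∀ I ⊆ M.E, (M.Indep I ↔ LinearIndependent (ZMod 3) fun x : I => N9Cols (φ x.1))

/-- `M` is binary: representable over the two-element field `GF(2)`, i.e. there is a
map from the ground set to a `GF(2)`-vector space under which independence in `M`
coincides with linear independence. -/
def IsBinary (M : Matroid α) : Prop :=
  ∃ (ι : Type u) (φ : α → ι → ZMod 2),
    ∀ I ⊆ M.E, (M.Indep I ↔ LinearIndependent (ZMod 2) fun x : I => φ x.1)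

/-- `M` is a uniform matroid, i.e. isomorphic to `U_{m,n}` for some `m` and `n`:
the ground set has `n` elements and a subset of the ground set is independent
exactly when it has at most `m` elements. -/
def IsUniform (M : Matroid α) : Prop :=
  ∃ m n : ℕ, M.E.encard = (n : ℕ∞) ∧ ∀ I ⊆ M.E, (M.Indep I ↔ I.encard ≤ (m : ℕ∞))


/-!
If `M ＼ a` has an exact vertical `j`-separation `(X, Y)`, then putting `a` on either side must
not give a vertical `j`- or `(j + 1)`-separation of `M`; this forces `r(X) = r(Y) = j` and
`r(M) = j + 1`. Minimality gives, for each element `e`, a vertical separation `(A, B)` of `M ＼ e`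
with `e ∉ cl(A) ∪ cl(B)` (otherwise it would extend to `M`), so `M` is simple and every set of
rank at most two has at most three elements. For `j = 1` this gives `|E(M)| ≤ 3`. For `j = 2` the
rank is three and the complement of each line is a cocircuit; with no `4`-element cocircuits this
forces `|E(M)| = 6` and every line to have exactly three points, and then the lines through `a`
would pair off the five remaining elements.
-/

namespace Matroid

variable {M : Matroid α} {C D I X : Set α} {e : α}

theorem eRk_insert_of_mem_closure (he : e ∈ M.closure X) : M.eRk (insert e X) = M.eRk X := by
  rw [← eRk_closure_eq, closure_insert_eq_of_mem_closure he, eRk_closure_eq]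

theorem eRk_delete (M : Matroid α) (hX : X ⊆ M.E \ D) : (M ＼ D).eRk X = M.eRk X :=
  restrict_eRk_eq M hX

theorem eRank_delete (M : Matroid α) (D : Set α) : (M ＼ D).eRank = M.eRk (M.E \ D) := rfl

theorem exists_eRk_eq_natCast (M : Matroid α) [M.RankFinite] (X : Set α) :
    ∃ n : ℕ, M.eRk X = n :=
  (ENat.ne_top_iff_exists.1 (eRk_ne_top_iff.2 (M.isRkFinite_set X))).imp fun _ h => h.symm

theorem Indep.isCocircuit_compl_closure (hI : M.Indep I) (hIfin : I.Finite)
    (hr : M.eRank = I.encard + 1) : M.IsCocircuit (M.E \ M.closure I) := by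
  obtain ⟨e, heE, heI⟩ : ∃ e ∈ M.E, e ∉ M.closure I := by
    by_contra! hsp
    have hle : M.eRank ≤ I.encard := by
      rw [← eRk_ground, ← hI.eRk_eq_encard, ← M.eRk_closure_eq I]
      exact M.eRk_mono hsp
    rw [hr] at hle
    exact (ENat.lt_add_one_iff hIfin.encard_lt_top.ne).2 le_rfl |>.not_ge hle
  have heI' : e ∉ I := fun h => heI (M.subset_closure I hI.subset_ground h)
  have hIe : M.Indep (insert e I) := (hI.insert_indep_iff_of_notMem heI').2 ⟨heE, heI⟩
  have hB : M.IsBase (insert e I) := hIe.isBase_of_eRk_ge (hIfin.insert e) (by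
    rw [hIe.eRk_eq_encard, encard_insert_of_notMem heI', hr, add_comm])
  simpa [insert_sdiff_self_of_notMem heI'] using
    hB.compl_closure_sdiff_singleton_isCocircuit (mem_insert e I)

theorem IsCocircuit.mCocircuit (hC : M.IsCocircuit C) : MCocircuit M C :=
  ⟨hC.dep, fun _ hD => hC.ssubset_indep hD⟩

end Matroid

theorem Set.Finite.even_ncard_of_involution {S : Set α} (hS : S.Finite) {f : α → α}
    (hf : MapsTo f S S) (hinv : ∀ x ∈ S, f (f x) = x) (hfix : ∀ x ∈ S, f x ≠ x) :
    Even S.ncard := by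
  classical
  have := hS.fintype
  have hg : Function.Involutive (hf.restrict f S S) := fun x => Subtype.ext (hinv x x.2)
  have hsupp : (hg.toPerm _).support = Finset.univ := by
    ext x
    simpa [Equiv.Perm.mem_support, Subtype.ext_iff] using hfix x x.2
  have h2 : hg.toPerm _ ^ 2 = 1 := by
    ext x
    simp [sq, hg x]
  rw [even_iff_two_dvd, ← Nat.card_coe_set_eq, Nat.card_eq_fintype_card, ← Finset.card_univ,
    ← hsupp]
  exact Equiv.Perm.two_dvd_card_support h2


section Connectivity

variable {M : Matroid α} {A B P Q : Set α} {e : α} {i j k : ℕ}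

theorem mrk_eq_eRk (M : Matroid α) (X : Set α) : mrk M X = M.eRk X := by
  refine le_antisymm (iSup₂_le fun I hI => hI.1.encard_le_eRk_of_subset hI.2) ?_
  obtain ⟨I, hI⟩ := M.exists_isBasis' X
  rw [← hI.encard_eq_eRk]
  exact le_iSup₂ (f := fun I (_ : I ∈ {I | M.Indep I ∧ I ⊆ X}) => I.encard) I
    ⟨hI.indep, hI.subset⟩

theorem mrank_eq_eRank (M : Matroid α) : mrank M = M.eRank := by
  rw [mrank, mrk_eq_eRk, eRk_ground]

theorem lam_eq_of_partition (hPQ : P ∪ Q = M.E) (hd : Disjoint P Q) :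
    lam M P = M.eRk P + M.eRk Q - M.eRank := by
  rw [lam, mrk_eq_eRk, mrk_eq_eRk, mrank_eq_eRank, ← hPQ, union_sdiff_left, hd.symm.sdiff_eq_left]

theorem isVSep_iff : IsVSep M j P Q ↔ P ∪ Q = M.E ∧ Disjoint P Q ∧
    M.eRk P + M.eRk Q - M.eRank < j ∧ j ≤ M.eRk P ∧ j ≤ M.eRk Q := by
  simp only [IsVSep, mrk_eq_eRk]
  refine and_congr_right fun hPQ => and_congr_right fun hd => ?_
  rw [lam_eq_of_partition hPQ hd]

theorem IsVSep.symm (h : IsVSep M j P Q) : IsVSep M j Q P := by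
  obtain ⟨hPQ, hd, hlt, hP, hQ⟩ := isVSep_iff.1 h
  exact isVSep_iff.2 ⟨union_comm P Q ▸ hPQ, hd.symm, add_comm (M.eRk P) _ ▸ hlt, hQ, hP⟩

theorem VertConn.mono (hM : VertConn M k) (hjk : j ≤ k) : VertConn M j :=
  fun i P Q hi hij => hM i P Q hi (hij.trans_le hjk)

theorem VertConn.le_sub_of_partition (hM : VertConn M k) (hPQ : P ∪ Q = M.E)
    (hd : Disjoint P Q) {p q r : ℕ} (hp : M.eRk P = p) (hq : M.eRk Q = q) (hr : M.eRank = r)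
    (hi : 0 < i) (hik : i < k) (hip : i ≤ p) (hiq : i ≤ q) : i ≤ p + q - r := by
  by_contra hlt
  refine hM i P Q hi hik (isVSep_iff.2 ⟨hPQ, hd, ?_, ?_, ?_⟩)
  · rw [hp, hq, hr]
    exact_mod_cast not_le.1 hlt
  · rw [hp]
    exact_mod_cast hip
  · rw [hq]
    exact_mod_cast hiq

theorem notMem_closure_of_isVSep_delete (hM : VertConn M k) (hj : 0 < j) (hjk : j < k)
    (he : e ∈ M.E) (h : IsVSep (M ＼ {e}) j A B) : e ∉ M.closure A := by
  intro heA
  obtain ⟨hAB, hd, hlt, hA, hB⟩ := isVSep_iff.1 h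
  rw [delete_ground] at hAB
  have hAs : A ⊆ M.E \ {e} := hAB ▸ subset_union_left
  have hBs : B ⊆ M.E \ {e} := hAB ▸ subset_union_right
  rw [eRk_delete M hAs, eRk_delete M hBs] at hlt
  rw [eRk_delete M hAs] at hA
  rw [eRk_delete M hBs] at hB
  refine hM j (insert e A) B hj hjk (isVSep_iff.2 ⟨?_, ?_, ?_, ?_, hB⟩)
  · rw [insert_union, hAB, insert_sdiff_singleton, insert_eq_of_mem he]
  · exact disjoint_insert_left.2 ⟨fun heB => (hBs heB).2 rfl, hd⟩
  · rw [eRk_insert_of_mem_closure heA]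
    rw [eRank_delete] at hlt
    exact lt_of_le_of_lt (tsub_le_tsub_left (M.eRk_le_eRank _) _) hlt
  · rwa [eRk_insert_of_mem_closure heA]

end Connectivity

section MinVertConn4

variable {M : Matroid α} {C S : Set α} {e w x y : α}

theorem MinVertConn4.exists_cover_notMem_closure (hM : MinVertConn4 M) (he : e ∈ M.E) :
    ∃ A B, A ∪ B = M.E \ {e} ∧ e ∉ M.closure A ∧ e ∉ M.closure B := by
  have hdel := hM.2 e he
  simp only [VertConn, not_forall, not_not] at hdel
  obtain ⟨j, A, B, hj, hj4, hAB⟩ := hdel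
  exact ⟨A, B, (isVSep_iff.1 hAB).1, notMem_closure_of_isVSep_delete hM.1 hj hj4 he hAB,
    notMem_closure_of_isVSep_delete hM.1 hj hj4 he hAB.symm⟩

theorem MinVertConn4.notMem_closure_singleton (hM : MinVertConn4 M) (hx : x ∈ M.E)
    (hy : y ∈ M.E) (hxy : x ≠ y) : x ∉ M.closure {y} := by
  obtain ⟨A, B, hAB, hA, hB⟩ := hM.exists_cover_notMem_closure hx
  have hyAB : y ∈ A ∪ B := hAB ▸ ⟨hy, hxy.symm⟩
  rcases hyAB with hyA | hyB
  · exact fun h => hA (M.closure_subset_closure (singleton_subset_iff.2 hyA) h)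
  · exact fun h => hB (M.closure_subset_closure (singleton_subset_iff.2 hyB) h)

theorem MinVertConn4.isNonloop (hM : MinVertConn4 M) (he : e ∈ M.E) : M.IsNonloop e := by
  obtain ⟨A, -, -, hA, -⟩ := hM.exists_cover_notMem_closure he
  exact isNonloop_of_notMem_closure hA

theorem MinVertConn4.indep_pair (hM : MinVertConn4 M) (hx : x ∈ M.E) (hy : y ∈ M.E) :
    M.Indep {x, y} := by
  rw [(indep_singleton.2 (hM.isNonloop hy)).insert_indep_iff]
  by_cases hxy : x = y
  · exact Or.inr hxy
  · exact Or.inl ⟨hx, hM.notMem_closure_singleton hx hy hxy⟩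

theorem MinVertConn4.encard_inter_le_one (hM : MinVertConn4 M) (hS : S ⊆ M.E)
    (hr : M.eRk S ≤ 2) (hw : w ∈ S) (hC : w ∉ M.closure C) : (S ∩ C).encard ≤ 1 := by
  refine encard_le_one_iff.2 fun p q hp hq => by_contra fun hpq => hC ?_
  have hI := hM.indep_pair (hS hp.1) (hS hq.1)
  have hIS : M.IsBasis {p, q} S := hI.isBasis_of_eRk_ge (toFinite _) (pair_subset hp.1 hq.1)
    (by rwa [hI.eRk_eq_encard, encard_pair hpq])
  exact M.closure_subset_closure (pair_subset hp.2 hq.2) (hIS.subset_closure hw)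

theorem MinVertConn4.encard_le_three (hM : MinVertConn4 M) (hS : S ⊆ M.E)
    (hr : M.eRk S ≤ 2) : S.encard ≤ 3 := by
  obtain rfl | ⟨w, hw⟩ := S.eq_empty_or_nonempty
  · simp
  obtain ⟨A, B, hAB, hA, hB⟩ := hM.exists_cover_notMem_closure (hS hw)
  have hcover : S ⊆ insert w (S ∩ A ∪ S ∩ B) := by
    intro x hx
    by_cases hxw : x = w
    · exact Or.inl hxw
    · have hxAB : x ∈ A ∪ B := hAB ▸ ⟨hS hx, hxw⟩
      exact Or.inr (hxAB.imp (⟨hx, ·⟩) (⟨hx, ·⟩))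
  calc S.encard ≤ (S ∩ A ∪ S ∩ B).encard + 1 :=
        (encard_le_encard hcover).trans (encard_insert_le _ _)
    _ ≤ (S ∩ A).encard + (S ∩ B).encard + 1 := by gcongr; exact encard_union_le _ _
    _ ≤ 1 + 1 + 1 := by
      gcongr
      exacts [hM.encard_inter_le_one hS hr hw hA, hM.encard_inter_le_one hS hr hw hB]
    _ = 3 := by norm_num

end MinVertConn4

section ExactSeparation

variable {M : Matroid α} {P Q X Y : Set α} {a : α} {j k : ℕ}

theorem IsExactVSep.symm (h : IsExactVSep M j P Q) : IsExactVSep M j Q P := by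
  obtain ⟨hsep, hexact⟩ := h
  obtain ⟨hPQ, hd, -⟩ := isVSep_iff.1 hsep
  refine ⟨hsep.symm, ?_⟩
  rwa [lam_eq_of_partition (union_comm P Q ▸ hPQ) hd.symm, add_comm,
    ← lam_eq_of_partition hPQ hd]

theorem VertConn.rankFinite (hM : VertConn M k) (hk : 1 < k) (hPQ : P ∪ Q = M.E)
    (hd : Disjoint P Q) (hP : 1 ≤ M.eRk P) (hQ : 1 ≤ M.eRk Q) : M.RankFinite := by
  by_contra hinf
  rw [not_rankFinite_iff, ← eRank_eq_top_iff] at hinf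
  exact hM 1 P Q one_pos hk (isVSep_iff.2 ⟨hPQ, hd, by simp [hinf], by simpa using hP,
    by simpa using hQ⟩)

theorem eRk_eq_of_isExactVSep_delete (hM : VertConn M (j + 2)) (ha : a ∈ M.E)
    (h : IsExactVSep (M ＼ {a}) j X Y) : M.eRk X = j ∧ M.eRank = M.eRk Y + 1 := by
  obtain ⟨hsep, hexact⟩ := h
  obtain ⟨hXY, hd, hlt, hjX, hjY⟩ := isVSep_iff.1 hsep
  rw [delete_ground] at hXY
  have hXs : X ⊆ M.E \ {a} := hXY ▸ subset_union_left
  have hYs : Y ⊆ M.E \ {a} := hXY ▸ subset_union_right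
  have hXaY : X ∪ insert a Y = M.E := by
    rw [union_insert, hXY, insert_sdiff_singleton, insert_eq_of_mem ha]
  have hdXaY : Disjoint X (insert a Y) := disjoint_insert_right.2 ⟨fun h => (hXs h).2 rfl, hd⟩
  rw [eRk_delete M hXs] at hjX
  rw [eRk_delete M hYs] at hjY
  have hj0 : 0 < j := Nat.pos_of_ne_zero fun hj => by simp [hj] at hlt
  have : M.RankFinite := hM.rankFinite (by omega) hXaY hdXaY
    (le_trans (by exact_mod_cast hj0) hjX)
    (le_trans (by exact_mod_cast hj0) (hjY.trans (M.eRk_mono (subset_insert a Y))))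
  obtain ⟨x, hx⟩ := M.exists_eRk_eq_natCast X
  obtain ⟨y, hy⟩ := M.exists_eRk_eq_natCast Y
  obtain ⟨ya, hya⟩ := M.exists_eRk_eq_natCast (insert a Y)
  obtain ⟨r', hr'⟩ := M.exists_eRk_eq_natCast (M.E \ {a})
  obtain ⟨r, hr⟩ : ∃ n : ℕ, M.eRank = n := M.eRk_ground ▸ M.exists_eRk_eq_natCast M.E
  rw [lam_eq_of_partition (M := M ＼ {a}) (by rwa [delete_ground]) hd, eRank_delete,
    eRk_delete M hXs, eRk_delete M hYs, hx, hy, hr'] at hexact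
  rw [hx] at hjX
  rw [hy] at hjY
  have hyY : y ≤ ya ∧ ya ≤ y + 1 := by
    have := And.intro (M.eRk_mono (subset_insert a Y)) (M.eRk_insert_le_add_one a Y)
    rwa [hy, hya, ← Nat.cast_one, ← Nat.cast_add, Nat.cast_le, Nat.cast_le] at this
  have hrr : r' ≤ r := by
    have := M.eRk_le_eRank (M.E \ {a})
    rwa [hr', hr, Nat.cast_le] at this
  norm_cast at hexact hjX hjY
  -- `λ_M(X) ≤ λ_{M ＼ a}(X) + 1 = j`, and `(X, a ∪ Y)` is not a vertical `j`-separation of `M`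
  have hlamX := hM.le_sub_of_partition hXaY hdXaY hx hya hr hj0 (by omega) hjX (by omega)
  have hxj : x ≤ j := by
    by_contra! hjx
    have := hM.le_sub_of_partition hXaY hdXaY hx hya hr (i := j + 1) (by omega) (by omega)
      hjx (by omega)
    omega
  refine ⟨by rw [hx, show x = j by omega], ?_⟩
  rw [hr, hy, show r = y + 1 by omega]
  push_cast
  rfl

theorem eRank_eq_of_isExactVSep_delete (hM : VertConn M (j + 2)) (ha : a ∈ M.E)
    (h : IsExactVSep (M ＼ {a}) j X Y) : M.eRk X = j ∧ M.eRk Y = j ∧ M.eRank = j + 1 := by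
  obtain ⟨hX, hr⟩ := eRk_eq_of_isExactVSep_delete hM ha h
  obtain ⟨hY, -⟩ := eRk_eq_of_isExactVSep_delete hM ha h.symm
  exact ⟨hX, hY, hY ▸ hr⟩

end ExactSeparation

section RankThree

variable {M : Matroid α} {S X Y : Set α} {a x y : α}

theorem MinVertConn4.encard_ground_ne_encard_closure_add_four (hM : MinVertConn4 M)
    (hr : M.eRank = 3) (h4 : ∀ C, M.IsCocircuit C → C.encard ≠ 4) (hS : M.eRk S = 2) :
    M.E.encard ≠ (M.closure S).encard + 4 := by
  intro hE
  obtain ⟨I, hI⟩ := M.exists_isBasis' S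
  have hI2 : I.encard = 2 := by rw [hI.encard_eq_eRk, hS]
  have hC := hI.indep.isCocircuit_compl_closure (finite_of_encard_eq_coe hI2)
    (by rw [hr, hI2]; norm_num)
  rw [hI.closure_eq_closure] at hC
  have hL3 : (M.closure S).encard ≤ 3 :=
    hM.encard_le_three (M.closure_subset_ground S) (by rw [eRk_closure_eq, hS])
  have hsum := encard_sdiff_add_encard_of_subset (M.closure_subset_ground S)
  exact h4 _ hC (ENat.add_left_injective_of_ne_top (ne_top_of_le_ne_top (by decide) hL3)
    (hsum.trans (hE.trans (add_comm _ _))))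

theorem MinVertConn4.encard_ground_eq_six (hM : MinVertConn4 M) (hr : M.eRank = 3)
    (h4 : ∀ C, M.IsCocircuit C → C.encard ≠ 4) (hcard : 6 ≤ M.E.encard)
    (hXY : X ∪ Y = M.E \ {a}) (hX : M.eRk X = 2) (hY : M.eRk Y = 2) : M.E.encard = 6 := by
  have hcover : M.E ⊆ insert a (M.closure X ∪ M.closure Y) := by
    intro z hz
    by_cases hza : z = a
    · exact Or.inl hza
    · have hzXY : z ∈ X ∪ Y := hXY ▸ ⟨hz, hza⟩
      exact Or.inr (hzXY.imp (M.mem_closure_of_mem' · hz) (M.mem_closure_of_mem' · hz))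
  have hle : M.E.encard ≤ (M.closure X).encard + (M.closure Y).encard + 1 :=
    (encard_le_encard hcover).trans
      ((encard_insert_le _ _).trans (by gcongr; exact encard_union_le _ _))
  have hX3 := hM.encard_le_three (M.closure_subset_ground X) (by rw [eRk_closure_eq, hX])
  have hY3 := hM.encard_le_three (M.closure_subset_ground Y) (by rw [eRk_closure_eq, hY])
  have hX4 := hM.encard_ground_ne_encard_closure_add_four hr h4 hX
  have hY4 := hM.encard_ground_ne_encard_closure_add_four hr h4 hY
  generalize M.E.encard = n at *
  generalize (M.closure X).encard = cx at *
  generalize (M.closure Y).encard = cy at *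
  lift cx to ℕ using ne_top_of_le_ne_top (by decide) hX3
  lift cy to ℕ using ne_top_of_le_ne_top (by decide) hY3
  lift n to ℕ using ne_top_of_le_ne_top (by simp) hle
  norm_cast at *
  omega

theorem MinVertConn4.encard_closure_pair_eq_three (hM : MinVertConn4 M) (hr : M.eRank = 3)
    (h4 : ∀ C, M.IsCocircuit C → C.encard ≠ 4) (hE : M.E.encard = 6) (hx : x ∈ M.E)
    (hy : y ∈ M.E) (hxy : x ≠ y) : (M.closure {x, y}).encard = 3 := by
  have hI := hM.indep_pair hx hy
  have h2 : M.eRk {x, y} = 2 := by rw [hI.eRk_eq_encard, encard_pair hxy]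
  have hle := hM.encard_le_three (M.closure_subset_ground _) (by rw [eRk_closure_eq, h2])
  have hge : 2 ≤ (M.closure {x, y}).encard :=
    encard_pair hxy ▸ encard_le_encard (M.subset_closure _ hI.subset_ground)
  have hne := hM.encard_ground_ne_encard_closure_add_four hr h4 h2
  rw [hE] at hne
  generalize (M.closure {x, y}).encard = c at *
  lift c to ℕ using ne_top_of_le_ne_top (by decide) hle
  norm_cast at *
  omega

theorem MinVertConn4.even_ncard_sdiff_singleton (hM : MinVertConn4 M) (hE : M.E.Finite)
    (ha : a ∈ M.E) (hlines : ∀ y ∈ M.E, y ≠ a → (M.closure {a, y}).encard = 3) :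
    Even (M.E \ {a}).ncard := by
  have hthird (y) (hy : y ∈ M.E \ {a}) : ∃ w, M.closure {a, y} \ {a, y} = {w} := by
    rw [← encard_eq_one]
    have h := encard_sdiff_add_encard_of_subset (M.subset_closure {a, y} (pair_subset ha hy.1))
    rw [hlines y hy.1 hy.2, encard_pair (Ne.symm hy.2)] at h
    exact ENat.add_left_injective_of_ne_top (by decide) (h.trans (by norm_num))
  have : Nonempty α := ⟨a⟩
  choose! f hf using hthird
  have hmem (y) (hy : y ∈ M.E \ {a}) : f y ∈ M.closure {a, y} ∧ f y ≠ a ∧ f y ≠ y := by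
    have h : f y ∈ M.closure {a, y} \ {a, y} := (hf y hy).symm ▸ rfl
    simpa [not_or] using h
  have hmaps : MapsTo f (M.E \ {a}) (M.E \ {a}) :=
    fun y hy => ⟨M.closure_subset_ground _ (hmem y hy).1, (hmem y hy).2.1⟩
  refine hE.sdiff.even_ncard_of_involution hmaps (fun y hy => ?_) fun y hy => (hmem y hy).2.2
  obtain ⟨hfy, hfa, hfy'⟩ := hmem y hy
  have hy' : y ∈ M.closure {a, f y} := by
    rw [pair_comm] at hfy ⊢
    exact mem_closure_insert (hM.notMem_closure_singleton (hmaps hy).1 ha hfa) hfy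
  have hya : y ≠ a := hy.2
  have h : y ∈ M.closure {a, f y} \ {a, f y} := ⟨hy', by simp [hya, Ne.symm hfy']⟩
  rw [hf (f y) (hmaps hy)] at h
  exact (mem_singleton_iff.1 h).symm

theorem MinVertConn4.eRank_ne_three (hM : MinVertConn4 M)
    (h4 : ∀ C, M.IsCocircuit C → C.encard ≠ 4) (hcard : 6 ≤ M.E.encard) (ha : a ∈ M.E)
    (hXY : X ∪ Y = M.E \ {a}) (hX : M.eRk X = 2) (hY : M.eRk Y = 2) : M.eRank ≠ 3 := by
  intro hr
  have hE6 := hM.encard_ground_eq_six hr h4 hcard hXY hX hY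
  have hEfin : M.E.Finite := finite_of_encard_eq_coe hE6
  have heven := hM.even_ncard_sdiff_singleton hEfin ha fun y hy hya =>
    hM.encard_closure_pair_eq_three hr h4 hE6 ha hy (Ne.symm hya)
  have h6 : M.E.ncard = 6 := by rw [ncard_def, hE6]; rfl
  have h5 := ncard_sdiff_singleton_add_one ha hEfin
  rw [h6] at h5
  rw [show (M.E \ {a}).ncard = 5 by omega] at heven
  exact absurd heven (by decide)

end RankThree

theorem statement_14_general (M : Matroid α) (hM : MinVertConn4 M) (hcard : 6 ≤ M.E.encard)
    (h4 : ¬ ∃ C, MCocircuit M C ∧ C.encard = 4) :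
    ¬ ∃ a ∈ M.E, ∃ j, (j = 1 ∨ j = 2) ∧ ∃ X Y, IsExactVSep (mdel M {a}) j X Y := by
  rintro ⟨a, ha, j, hj, X, Y, hsep⟩
  have h4' : ∀ C, M.IsCocircuit C → C.encard ≠ 4 :=
    fun C hC hC4 => h4 ⟨C, hC.mCocircuit, hC4⟩
  obtain ⟨hX, hY, hr⟩ := eRank_eq_of_isExactVSep_delete (hM.1.mono (by omega)) ha hsep
  rcases hj with rfl | rfl
  · have hE3 := hM.encard_le_three Subset.rfl (by rw [eRk_ground, hr]; norm_num)
    exact absurd (hcard.trans hE3) (by norm_num)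
  · exact hM.eRank_ne_three h4' hcard ha hsep.1.1 hX hY hr

/-- If `M` is minimally vertically 4-connected with at least six elements, no 4-element
cocircuit and no 5-element cocircuit containing a triangle, then no deletion `M \ a` has an
exact vertical `j`-separation with `j ∈ {1,2}`. -/
theorem statement_14 (M : Matroid α) (hM : MinVertConn4 M) (hcard : 6 ≤ M.E.encard)
    (h4 : ¬ ∃ C, MCocircuit M C ∧ C.encard = 4)
    (h5 : ¬ ∃ C, MCocircuit M C ∧ C.encard = 5 ∧ ∃ T ⊆ C, IsTriangle M T) :
    ¬ ∃ a ∈ M.E, ∃ j, (j = 1 ∨ j = 2) ∧ ∃ X Y, IsExactVSep (mdel M {a}) j X Y :=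
  statement_14_general M hM hcard h4
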